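/- Let a > -1, b > 0, c > 0 be real numbers with c > (a+1)/b, and let 0 < r ≤ 1. Then for every ε ∈ (0,1], ∫₀^r u^{2a+1}/(u^{2b} + ε²)^c du ≥ ε^{-2(c - (a+1)/b)} · ∫₀^r v^{2a+1}/(v^{2b} + 1)^c dv. -/

import Mathlib

/-! Substituting `u = ε^{1/b} v` shows that the left-hand side is the integral of the same
integrand as the right-hand side, taken over the shorter interval `[0, ε^{1/b} r]` (as `ε ≤ 1`);
that integrand is nonnegative, so enlarging the interval to `[0, r]` only increases the integral. -/

open MeasureTheory intervalIntegral Real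

lemma rpow_inv_mul_rpow_two_mul {b ε v : ℝ} (hb : b ≠ 0) (hε : 0 ≤ ε) (hv : 0 ≤ v) :
    (ε ^ b⁻¹ * v) ^ (2 * b) = ε ^ 2 * v ^ (2 * b) := by
  rw [mul_rpow (rpow_nonneg hε _) hv, ← rpow_mul hε, show b⁻¹ * (2 * b) = 2 by field_simp]
  norm_cast

lemma rpow_inv_mul_integrand_comp_rpow_inv_mul {a b c ε v : ℝ} (hb : b ≠ 0) (hε : 0 < ε)
    (hv : 0 ≤ v) :
    ε ^ b⁻¹ * ((ε ^ b⁻¹ * v) ^ (2 * a + 1) / ((ε ^ b⁻¹ * v) ^ (2 * b) + ε ^ 2) ^ c)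
      = ε ^ (-2 * (c - (a + 1) / b)) * (v ^ (2 * a + 1) / (v ^ (2 * b) + 1) ^ c) := by
  have hw : 0 < v ^ (2 * b) + 1 := by positivity
  have hexp : -2 * (c - (a + 1) / b) = b⁻¹ + b⁻¹ * (2 * a + 1) - 2 * c := by
    field_simp
    ring
  rw [rpow_inv_mul_rpow_two_mul hb hε.le hv, show ε ^ 2 * v ^ (2 * b) + ε ^ 2
      = ε ^ 2 * (v ^ (2 * b) + 1) by ring, mul_rpow (by positivity) hw.le,
    mul_rpow (by positivity) hv, ← rpow_mul hε.le, ← rpow_natCast, ← rpow_mul hε.le, hexp,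
    rpow_sub hε, rpow_add hε]
  push_cast
  field_simp

lemma intervalIntegrable_rpow_div_rpow_add {a b c t r : ℝ} (ha : -1 < a) (hb : 0 ≤ b)
    (ht : 0 < t) (hr : 0 ≤ r) :
    IntervalIntegrable (fun u => u ^ (2 * a + 1) / (u ^ (2 * b) + t) ^ c) volume 0 r := by
  have hden : ∀ u ∈ Set.uIcc 0 r, 0 < u ^ (2 * b) + t := fun u hu => by
    rw [Set.uIcc_of_le hr] at hu
    have := rpow_nonneg hu.1 (2 * b)
    positivity
  have hcont : ContinuousOn (fun u => ((u ^ (2 * b) + t) ^ c)⁻¹) (Set.uIcc 0 r) :=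
    (((continuousOn_id.rpow_const fun _ _ => Or.inr (by positivity)).add
      continuousOn_const).rpow_const fun u hu => Or.inl (hden u hu).ne').inv₀
      fun u hu => (rpow_pos_of_pos (hden u hu) c).ne'
  simpa only [div_eq_mul_inv] using (intervalIntegrable_rpow' (by linarith)).mul_continuousOn hcont

lemma rpow_mul_integral_eq_integral_rpow_inv_mul {a b c ε r : ℝ} (hb : b ≠ 0) (hε : 0 < ε)
    (hr : 0 ≤ r) :
    ε ^ (-2 * (c - (a + 1) / b)) * ∫ v in (0:ℝ)..r, v ^ (2 * a + 1) / (v ^ (2 * b) + 1) ^ c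
      = ∫ u in (0:ℝ)..(ε ^ b⁻¹ * r), u ^ (2 * a + 1) / (u ^ (2 * b) + ε ^ 2) ^ c := by
  rw [← intervalIntegral.integral_const_mul, ← integral_congr fun v hv =>
      rpow_inv_mul_integrand_comp_rpow_inv_mul hb hε (Set.uIcc_of_le hr ▸ hv).1,
    intervalIntegral.integral_const_mul, ← smul_eq_mul,
    smul_integral_comp_mul_left (fun u => u ^ (2 * a + 1) / (u ^ (2 * b) + ε ^ 2) ^ c), mul_zero]

theorem stmt_4_general (a b c r : ℝ) (ha : -1 < a) (hb : 0 < b) (hr0 : 0 < r) :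
    ∀ ε ∈ Set.Ioc (0:ℝ) 1,
      ε ^ (-2 * (c - (a + 1) / b)) * ∫ v in (0:ℝ)..r, v ^ (2*a+1) / (v ^ (2*b) + 1) ^ c
        ≤ ∫ u in (0:ℝ)..r, u ^ (2*a+1) / (u ^ (2*b) + ε ^ 2) ^ c := by
  rintro ε ⟨hε0, hε1⟩
  have hδ1 : ε ^ b⁻¹ ≤ 1 := rpow_le_one hε0.le hε1 (inv_nonneg.2 hb.le)
  rw [rpow_mul_integral_eq_integral_rpow_inv_mul hb.ne' hε0 hr0.le]
  refine integral_mono_interval le_rfl (by positivity) (mul_le_of_le_one_left hr0.le hδ1) ?_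
    (intervalIntegrable_rpow_div_rpow_add ha hb.le (by positivity) hr0.le)
  filter_upwards [ae_restrict_mem measurableSet_Ioc] with u hu
  exact div_nonneg (rpow_nonneg hu.1.le _)
    (rpow_nonneg (add_nonneg (rpow_nonneg hu.1.le _) (sq_nonneg ε)) _)

theorem stmt_4 (a b c r : ℝ) (ha : -1 < a) (hb : 0 < b) (hc : 0 < c)
    (hcrit : (a + 1) / b < c) (hr0 : 0 < r) (hr1 : r ≤ 1) :
    ∀ ε ∈ Set.Ioc (0:ℝ) 1,
      ε ^ (-2 * (c - (a + 1) / b)) * ∫ v in (0:ℝ)..r, v ^ (2*a+1) / (v ^ (2*b) + 1) ^ c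
        ≤ ∫ u in (0:ℝ)..r, u ^ (2*a+1) / (u ^ (2*b) + ε ^ 2) ^ c :=
  stmt_4_general a b c r ha hb hr0
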